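/- arXiv:2005.07590 — 2 statements merged into one kernel-verified Lean document; each statement's English description precedes it below -/
import Mathlib

section
/- Fix a health-care capacity c > 0 and let b* = L/(4c). For every peak-time parameter b > 0: the capacity exceedance E(b) equals 0 if b ≥ b*, and E(b) > 0 if b < b*. Hence E(b) = 0 if and only if b ≥ b*. -/
open Real MeasureTheory Filter

/-- The logistic infection curve with initial value `x₀` and peak-time parameter `b`:
`x_b t = exp (a t) / (exp (a b) + exp (a t))` where `a = log (1/x₀ - 1) / b`. -/
noncomputable def xcurve (x₀ b : ℝ) : ℝ → ℝ := fun t =>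
  Real.exp (Real.log (1 / x₀ - 1) / b * t) /
    (Real.exp (Real.log (1 / x₀ - 1) / b * b) + Real.exp (Real.log (1 / x₀ - 1) / b * t))

/-- The capacity exceedance `E(b) = ∫ₜ max (x_b′(t) - c) 0 dt`. -/
noncomputable def exceed (x₀ c b : ℝ) : ℝ :=
  ∫ t : ℝ, max (deriv (xcurve x₀ b) t - c) 0

/-!
Since `exp u / (exp v + exp u) = σ (u - v)` for the sigmoid `σ`, the curve is
`x_b t = σ (a (t - b))` and the wave is `a σ (1 - σ)` evaluated at `a (t - b)`. It is continuous,
nonnegative, integrable (as the derivative of a bounded increasing function) and, because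
`y (1 - y) ≤ 1/4` with equality at `y = σ 0 = 1/2`, its maximum is `a / 4 = L / (4b)`, reached at
`t = b`. The exceedance of a continuous integrable function over a level `c ≥ 0` vanishes exactly
when the function never exceeds `c`, so `E(b) = 0` iff `L / (4b) ≤ c`, i.e. iff `b ≥ b*`.
-/

theorem integrable_of_hasDerivAt_of_nonneg_of_abs_le {f f' : ℝ → ℝ} {C : ℝ}
    (hf : ∀ x, HasDerivAt f (f' x) x) (hf' : ∀ x, 0 ≤ f' x) (hC : ∀ x, |f x| ≤ C) :
    Integrable f' := by
  refine integrable_of_intervalIntegral_norm_bounded (2 * C) (a := Neg.neg) (b := id)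
    (l := atTop) (fun n => ?_) tendsto_neg_atTop_atBot tendsto_id (Eventually.of_forall fun n => ?_)
  · exact intervalIntegral.integrableOn_deriv_of_nonneg
      (fun x _ => (hf x).continuousAt.continuousWithinAt) (fun x _ => hf x) (fun x _ => hf' x)
  · have hint : IntervalIntegrable f' volume (-n) n :=
      intervalIntegral.intervalIntegrable_deriv_of_nonneg
        (fun x _ => (hf x).continuousAt.continuousWithinAt) (fun x _ => hf x) (fun x _ => hf' x)
    simp only [Real.norm_of_nonneg (hf' _), id]
    rw [intervalIntegral.integral_eq_sub_of_hasDerivAt (fun x _ => hf x) hint]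
    linarith [(abs_le.mp (hC n)).2, (abs_le.mp (hC (-n))).1]

theorem integral_max_sub_eq_zero_iff {X : Type*} [TopologicalSpace X] [MeasurableSpace X]
    [OpensMeasurableSpace X] {μ : Measure X} [μ.IsOpenPosMeasure] {g : X → ℝ} {c : ℝ}
    (hg : Continuous g) (hgi : Integrable g μ) (hc : 0 ≤ c) :
    ∫ x, max (g x - c) 0 ∂μ = 0 ↔ ∀ x, g x ≤ c := by
  have hcont : Continuous fun x => max (g x - c) 0 := by fun_prop
  have hint : Integrable (fun x => max (g x - c) 0) μ :=
    hgi.norm.mono' hcont.aestronglyMeasurable (ae_of_all _ fun x => by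
      rw [Real.norm_of_nonneg (le_max_right _ _), Real.norm_eq_abs]
      exact max_le (by linarith [le_abs_self (g x)]) (abs_nonneg _))
  rw [integral_eq_zero_iff_of_nonneg (f := fun x => max (g x - c) 0)
      (fun x => le_max_right _ _) hint,
    hcont.ae_eq_iff_eq μ continuous_zero]
  simp only [funext_iff, Pi.zero_apply, max_eq_right_iff, sub_nonpos]

theorem exp_div_exp_add_exp (u v : ℝ) : exp u / (exp v + exp u) = sigmoid (u - v) := by
  rw [sigmoid_def, neg_sub, exp_sub]
  field_simp
  ring

noncomputable def logisticWave (a s t : ℝ) : ℝ :=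
  a * (sigmoid (a * (t - s)) * (1 - sigmoid (a * (t - s))))

theorem hasDerivAt_sigmoid_mul_sub (a s t : ℝ) :
    HasDerivAt (fun t => sigmoid (a * (t - s))) (logisticWave a s t) t := by
  have := (hasDerivAt_sigmoid (a * (t - s))).comp t (((hasDerivAt_id t).sub_const s).const_mul a)
  simpa [logisticWave, mul_comm, Function.comp_def] using this

theorem continuous_logisticWave (a s : ℝ) : Continuous (logisticWave a s) := by
  unfold logisticWave; fun_prop

theorem logisticWave_nonneg {a : ℝ} (ha : 0 ≤ a) (s t : ℝ) : 0 ≤ logisticWave a s t :=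
  mul_nonneg ha (mul_nonneg (sigmoid_nonneg _) (sub_nonneg.mpr (sigmoid_le_one _)))

theorem logisticWave_le {a : ℝ} (ha : 0 ≤ a) (s t : ℝ) : logisticWave a s t ≤ a / 4 := by
  have := sq_nonneg (sigmoid (a * (t - s)) - 1 / 2)
  unfold logisticWave; nlinarith

theorem logisticWave_self (a s : ℝ) : logisticWave a s s = a / 4 := by
  norm_num [logisticWave]; ring

theorem integrable_logisticWave {a : ℝ} (ha : 0 ≤ a) (s : ℝ) :
    Integrable (logisticWave a s) :=
  integrable_of_hasDerivAt_of_nonneg_of_abs_le (C := 1) (hasDerivAt_sigmoid_mul_sub a s)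
    (logisticWave_nonneg ha s) fun t =>
      abs_le.mpr ⟨by linarith [sigmoid_nonneg (a * (t - s))], sigmoid_le_one _⟩

theorem forall_logisticWave_le_iff {a c : ℝ} (ha : 0 ≤ a) (s : ℝ) :
    (∀ t, logisticWave a s t ≤ c) ↔ a / 4 ≤ c :=
  ⟨fun h => logisticWave_self a s ▸ h s, fun h t => (logisticWave_le ha s t).trans h⟩

theorem xcurve_eq_sigmoid (x₀ b : ℝ) :
    xcurve x₀ b = fun t => sigmoid (log (1 / x₀ - 1) / b * (t - b)) :=
  funext fun t => by rw [xcurve, exp_div_exp_add_exp, mul_sub]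

theorem deriv_xcurve (x₀ b : ℝ) :
    deriv (xcurve x₀ b) = logisticWave (log (1 / x₀ - 1) / b) b := by
  rw [xcurve_eq_sigmoid]
  exact funext fun t => (hasDerivAt_sigmoid_mul_sub _ _ t).deriv

theorem exceedance_zero_iff (x₀ : ℝ) (hx₀ : 0 < x₀) (hx₀' : x₀ < 1 / 2)
    (L : ℝ) (hL : L = Real.log (1 / x₀ - 1))
    (c : ℝ) (hc : 0 < c) (bstar : ℝ) (hbstar : bstar = L / (4 * c))
    (b : ℝ) (hb : 0 < b) :
    (bstar ≤ b → exceed x₀ c b = 0) ∧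
    (b < bstar → 0 < exceed x₀ c b) ∧
    (exceed x₀ c b = 0 ↔ bstar ≤ b) := by
  have hL0 : 0 < L := hL ▸ log_pos (by rw [lt_sub_iff_add_lt, lt_div_iff₀ hx₀]; linarith)
  have ha : 0 ≤ L / b := (div_pos hL0 hb).le
  have hE : exceed x₀ c b = ∫ t, max (logisticWave (L / b) b t - c) 0 := by
    rw [exceed, deriv_xcurve, ← hL]
  have hpeak : L / b / 4 ≤ c ↔ bstar ≤ b := by
    rw [hbstar, div_div, div_le_iff₀ (by positivity), div_le_iff₀ (by positivity)]
    ring_nf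
  have hzero : exceed x₀ c b = 0 ↔ bstar ≤ b := by
    rw [hE, integral_max_sub_eq_zero_iff (continuous_logisticWave _ b)
      (integrable_logisticWave ha b) hc.le, forall_logisticWave_le_iff ha, hpeak]
  have hnonneg : 0 ≤ exceed x₀ c b := integral_nonneg fun t => le_max_right _ _
  exact ⟨hzero.2, fun h => hnonneg.lt_of_ne fun h' => (hzero.1 h'.symm).not_gt h, hzero⟩
end

section
/- (Proposition 3.) Suppose the welfare weight satisfies λ ∈ (0, 1), g is strictly increasing on [b̲, ∞), and b̲ ≤ b*. Then for every b > b*, W_loss(b) > W_loss(b*). Consequently, no b > b* minimizes the welfare loss on [b̲, ∞): every optimal peak-time parameter b̂ satisfies b̂ ≤ b*, i.e., the optimal policy weakly exceeds health-care capacity at some time. -/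
open Real MeasureTheory Filter

/-!
Past `b*` the wave never exceeds capacity: the logistic curve with rate `a` has peak slope `a / 4`,
and `a / 4 = L / (4 b) ≤ c` exactly when `b ≥ b*`. So on `[b*, ∞)` the loss reduces to
`λ (1 - x₀) g b`, which is strictly increasing, and every minimizer lies in `[b̲, b*]`.
-/

lemma hasDerivAt_logistic (a K t : ℝ) (hK : 0 < K) :
    HasDerivAt (fun t => exp (a * t) / (K + exp (a * t)))
      (a * K * exp (a * t) / (K + exp (a * t)) ^ 2) t := by
  have hexp : HasDerivAt (fun t => exp (a * t)) (a * exp (a * t)) t := by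
    simpa [mul_comm] using ((hasDerivAt_id t).const_mul a).exp
  exact (hexp.div (hexp.const_add K) (by positivity)).congr_deriv (by ring)

lemma mul_div_add_sq_le_quarter {K E : ℝ} (hK : 0 < K) (hE : 0 < E) :
    K * E / (K + E) ^ 2 ≤ 1 / 4 := by
  rw [div_le_div_iff₀ (by positivity) (by norm_num)]
  nlinarith [sq_nonneg (K - E)]

lemma deriv_logistic_le (a K t : ℝ) (ha : 0 ≤ a) (hK : 0 < K) :
    deriv (fun t => exp (a * t) / (K + exp (a * t))) t ≤ a / 4 := by
  rw [(hasDerivAt_logistic a K t hK).deriv, mul_assoc, mul_div_assoc]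
  simpa [div_eq_mul_inv] using
    mul_le_mul_of_nonneg_left (mul_div_add_sq_le_quarter hK (exp_pos (a * t))) ha

lemma exceed_eq_zero (x₀ c b : ℝ) (ha : 0 ≤ log (1 / x₀ - 1) / b)
    (hpeak : log (1 / x₀ - 1) / b / 4 ≤ c) : exceed x₀ c b = 0 := by
  have hbelow : ∀ t, deriv (xcurve x₀ b) t ≤ c := fun t =>
    (deriv_logistic_le _ _ t ha (exp_pos _)).trans hpeak
  simp [exceed, hbelow]

theorem prop3_optimal_weakly_exceeds_capacity_general (x₀ : ℝ) (hx₀' : x₀ < 1 / 2)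
    (L : ℝ) (hL : L = Real.log (1 / x₀ - 1))
    (c : ℝ) (hc : 0 < c) (bstar : ℝ) (hbstar : bstar = L / (4 * c))
    (blow : ℝ) (hblow : 0 < blow)
    (lam : ℝ) (hlam0 : 0 < lam)
    (g : ℝ → ℝ)
    (hgmono : StrictMonoOn g (Set.Ici blow))
    (W : ℝ → ℝ)
    (hW : ∀ b, blow ≤ b → W b = lam * g b * (1 - x₀) + (1 - lam) * exceed x₀ c b)
    (hblowbstar : blow ≤ bstar) :
    (∀ b, bstar < b → W bstar < W b) ∧
    ∀ bhat, blow ≤ bhat → (∀ b', blow ≤ b' → W bhat ≤ W b') → bhat ≤ bstar := by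
  have hbstar_pos : 0 < bstar := hblow.trans_le hblowbstar
  have hL_eq : L = 4 * c * bstar := by rw [hbstar]; field_simp
  have hexceed : ∀ b, bstar ≤ b → exceed x₀ c b = 0 := fun b hb => by
    have hb_pos : 0 < b := hbstar_pos.trans_le hb
    refine exceed_eq_zero x₀ c b (by rw [← hL, hL_eq]; positivity) ?_
    rw [← hL, hL_eq, div_div, div_le_iff₀ (by positivity)]
    nlinarith
  have hW_mono : ∀ b, bstar < b → W bstar < W b := fun b hb => by
    have hblow_b : blow ≤ b := hblowbstar.trans hb.le
    rw [hW bstar hblowbstar, hW b hblow_b, hexceed bstar le_rfl, hexceed b hb.le,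
      mul_zero, add_zero, add_zero]
    have hg_lt : g bstar < g b := hgmono hblowbstar hblow_b hb
    exact mul_lt_mul_of_pos_right (mul_lt_mul_of_pos_left hg_lt hlam0) (by linarith)
  refine ⟨hW_mono, fun bhat _ hmin => not_lt.mp fun hlt => ?_⟩
  exact (hW_mono bhat hlt).not_ge (hmin bstar hblowbstar)

theorem prop3_optimal_weakly_exceeds_capacity (x₀ : ℝ) (hx₀ : 0 < x₀) (hx₀' : x₀ < 1 / 2)
    (L : ℝ) (hL : L = Real.log (1 / x₀ - 1))
    (c : ℝ) (hc : 0 < c) (bstar : ℝ) (hbstar : bstar = L / (4 * c))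
    (blow : ℝ) (hblow : 0 < blow)
    (lam : ℝ) (hlam0 : 0 < lam) (hlam1 : lam < 1)
    (g : ℝ → ℝ) (hg : ∀ b, blow ≤ b → 1 ≤ g b)
    (hgmono : StrictMonoOn g (Set.Ici blow))
    (W : ℝ → ℝ)
    (hW : ∀ b, blow ≤ b → W b = lam * g b * (1 - x₀) + (1 - lam) * exceed x₀ c b)
    (hblowbstar : blow ≤ bstar) :
    (∀ b, bstar < b → W bstar < W b) ∧
    ∀ bhat, blow ≤ bhat → (∀ b', blow ≤ b' → W bhat ≤ W b') → bhat ≤ bstar :=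
  prop3_optimal_weakly_exceeds_capacity_general x₀ hx₀' L hL c hc bstar hbstar blow hblow lam hlam0
    g hgmono W hW hblowbstar
end
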